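/- Let P be a set of n distinct points in Euclidean space ℝ^d with n ≥ 2. Then the sum, over all subsets R with ∅ ≠ R ⊊ P, of mst(R) + mst(P \ R), is at least ((n−2)/(n−1)) · (2^n − 2) · mst(P). Equivalently, the average of the EMST-ratio (mst(R)+mst(P\R))/mst(P) over all 2^n − 2 proper 2-colorings of P is at least (n−2)/(n−1). -/

import Mathlib

/-
Fix a minimum spanning tree `T` of `P`; it has `m = n - 1` edges. If an edge `e` of `T` joins the
two colour classes of a proper colouring `R`, joining minimum spanning trees of `R` and `P \ R` by
`e` gives `mst P ≤ mst R + mst (P \ R) + ‖e‖`; averaging over these cut edges,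
`mst R + mst (P \ R) ≥ mst P - mean_{e ∈ cut R} ‖e‖`.
A 2-colouring of the vertices of a tree is determined by its set of cut edges and the colour of
one vertex, and every set of edges occurs. So the mean lengths sum, over all colourings, to
`2 ∑_{∅ ≠ C ⊆ E(T)} mean_{e ∈ C} ‖e‖ = 2 (2^m - 1) / m · mst P`, because every edge `e` has
`∑_{C ∋ e} 1 / |C| = ∑_k binom(m-1, k-1) / k = (2^m - 1) / m`.
-/

open scoped Classical

/-- The length of a minimum spanning tree of a finite point set `S` in a metric space:
the infimum, over all trees with vertex set `S`, of the sum of distances over the edges. -/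
noncomputable def mst {X : Type*} [MetricSpace X] (S : Finset X) : ℝ :=
  sInf {c : ℝ | ∃ G : SimpleGraph S, G.IsTree ∧
    c = ∑ᶠ e ∈ G.edgeSet,
      Sym2.lift ⟨fun (u v : S) => dist (u : X) (v : X), fun _ _ => dist_comm _ _⟩ e}

open Finset SimpleGraph
open scoped BigOperators

lemma Nat.sum_range_choose_div_succ (q : ℕ) :
    ∑ j ∈ range (q + 1), (q.choose j : ℝ) / (j + 1) = (2 ^ (q + 1) - 1) / (q + 1) := by
  have hterm (j : ℕ) : (q.choose j : ℝ) / (j + 1) = ((q + 1).choose (j + 1) : ℝ) / (q + 1) := by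
    rw [div_eq_div_iff (by positivity) (by positivity), mul_comm]
    exact_mod_cast Nat.add_one_mul_choose_eq q j
  have hsum : ∑ j ∈ range (q + 1), ((q + 1).choose (j + 1) : ℝ) = 2 ^ (q + 1) - 1 := by
    have := Nat.sum_range_choose (q + 1)
    rw [sum_range_succ', Nat.choose_zero_right] at this
    rw [eq_sub_iff_add_eq]
    exact_mod_cast this
  simp_rw [hterm, ← sum_div, hsum]

namespace Finset

lemma sum_powerset_filter_mem_inv_card {α : Type*} {E : Finset α} {e : α} (he : e ∈ E) :
    ∑ C ∈ E.powerset with e ∈ C, (#C : ℝ)⁻¹ = (2 ^ #E - 1) / #E := by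
  obtain ⟨F, heF, rfl⟩ : ∃ F, e ∉ F ∧ E = insert e F :=
    ⟨E.erase e, notMem_erase e E, (insert_erase he).symm⟩
  have hout : ∀ C ∈ F.powerset, (if e ∈ C then (#C : ℝ)⁻¹ else 0) = 0 := fun C hC =>
    if_neg fun h => heF (mem_powerset.1 hC h)
  have hin : ∀ D ∈ F.powerset,
      (if e ∈ insert e D then (#(insert e D) : ℝ)⁻¹ else 0) = (#D + 1 : ℝ)⁻¹ := fun D hD => by
    rw [if_pos (mem_insert_self e D), card_insert_of_notMem fun h => heF (mem_powerset.1 hD h)]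
    push_cast
    rfl
  rw [sum_filter, sum_powerset_insert heF, sum_congr rfl hout, sum_const_zero, zero_add,
    sum_congr rfl hin, sum_powerset, card_insert_of_notMem heF]
  simp_rw [sum_powersetCard _ _ (fun k => ((k : ℝ) + 1)⁻¹), nsmul_eq_mul, ← div_eq_mul_inv]
  push_cast
  exact Nat.sum_range_choose_div_succ #F

lemma sum_powerset_expect {α : Type*} (E : Finset α) (w : α → ℝ) :
    ∑ C ∈ E.powerset, 𝔼 e ∈ C, w e = (∑ e ∈ E, w e) * ((2 ^ #E - 1) / #E) := by
  calc ∑ C ∈ E.powerset, 𝔼 e ∈ C, w e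
      = ∑ C ∈ E.powerset, ∑ e ∈ C, w e * (#C : ℝ)⁻¹ := by
        simp_rw [expect_eq_sum_div_card, div_eq_mul_inv, sum_mul]
    _ = ∑ e ∈ E, ∑ C ∈ E.powerset with e ∈ C, w e * (#C : ℝ)⁻¹ :=
        sum_comm' fun C e => by
          simp only [mem_powerset, mem_filter]; exact ⟨fun h => ⟨h, h.1 h.2⟩, And.left⟩
    _ = (∑ e ∈ E, w e) * ((2 ^ #E - 1) / #E) := by
        rw [sum_mul]
        exact sum_congr rfl fun e he => by rw [← mul_sum, sum_powerset_filter_mem_inv_card he]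

lemma sum_powerset_eq_sum_univ_map {X M : Type*} [AddCommMonoid M] (P : Finset X)
    (g : Finset X → M) :
    ∑ R ∈ P.powerset, g R = ∑ s : Finset P, g (s.map (Function.Embedding.subtype _)) := by
  refine sum_nbij' (fun R => R.subtype (· ∈ P)) (fun s => s.map (Function.Embedding.subtype _))
    (by simp) (fun s _ => ?_) (fun R hR => ?_) (fun s _ => ?_) (fun R hR => ?_)
  · exact mem_powerset.2 (map_subtype_subset s)
  · exact subtype_map_of_mem (mem_powerset.1 hR)
  · ext x; simp
  · rw [subtype_map_of_mem (mem_powerset.1 hR)]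

lemma card_powerset_filter_nonempty_ne_add_two {X : Type*} [DecidableEq X] {P : Finset X}
    (hP : P.Nonempty) : #(P.powerset.filter fun R => R.Nonempty ∧ R ≠ P) + 2 = 2 ^ #P := by
  have hK : (P.powerset.filter fun R => R.Nonempty ∧ R ≠ P) = (P.powerset.erase ∅).erase P := by
    ext R; simp [nonempty_iff_ne_empty]; tauto
  have h1 := card_erase_add_one (empty_mem_powerset P)
  have h2 := card_erase_add_one (mem_erase.2 ⟨nonempty_iff_ne_empty.1 hP, mem_powerset_self P⟩)
  rw [card_powerset] at h1
  rw [hK]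
  omega

end Finset

def Sym2.Crosses {V : Type*} (s : Set V) : Sym2 V → Prop :=
  Sym2.lift ⟨fun u v => Xor (u ∈ s) (v ∈ s), fun _ _ => xor_comm _ _⟩

@[simp]
lemma Sym2.crosses_mk {V : Type*} {s : Set V} {u v : V} :
    Sym2.Crosses s s(u, v) ↔ Xor (u ∈ s) (v ∈ s) := Iff.rfl

lemma Sym2.crosses_symmDiff {V : Type*} {s t : Set V} {e : Sym2 V} :
    Sym2.Crosses (symmDiff s t) e ↔ Xor (Sym2.Crosses s e) (Sym2.Crosses t e) := by
  induction e with
  | _ u v => simp only [Sym2.crosses_mk, Set.mem_symmDiff, xor_def]; tauto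

namespace SimpleGraph

section Weight

variable {V : Type*} [Finite V] {w : Sym2 V → ℝ}

noncomputable def weight (w : Sym2 V → ℝ) (G : SimpleGraph V) : ℝ :=
  ∑ e ∈ G.edgeSet.toFinite.toFinset, w e

lemma weight_nonneg (hw : ∀ e, 0 ≤ w e) (G : SimpleGraph V) : 0 ≤ G.weight w :=
  sum_nonneg fun e _ => hw e

lemma weight_mono (hw : ∀ e, 0 ≤ w e) {G H : SimpleGraph V} (h : G ≤ H) :
    G.weight w ≤ H.weight w :=
  sum_le_sum_of_subset_of_nonneg (by simpa using edgeSet_mono h) fun e _ _ => hw e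

lemma weight_sup_le (hw : ∀ e, 0 ≤ w e) (G H : SimpleGraph V) :
    (G ⊔ H).weight w ≤ G.weight w + H.weight w := by
  rw [weight, weight, weight, ← sum_union_inter, ← Set.Finite.toFinset_union]
  simp only [edgeSet_sup]
  exact le_add_of_nonneg_right (sum_nonneg fun e _ => hw e)

lemma weight_map {W : Type*} [Finite W] (f : V ↪ W) (w : Sym2 W → ℝ) (G : SimpleGraph V) :
    (G.map f).weight w = G.weight (w ∘ Sym2.map f) := by
  have : (G.map f).edgeSet.toFinite.toFinset = G.edgeSet.toFinite.toFinset.map f.sym2Map := by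
    ext; simp [edgeSet_map]
  rw [weight, this, sum_map]
  rfl

lemma weight_edge {u v : V} (h : u ≠ v) : (edge u v).weight w = w s(u, v) := by
  rw [weight, ← sum_singleton w s(u, v)]
  congr 1
  ext e
  simp [edgeSet_edge_of_ne h]

end Weight

section Cut

variable {V : Type*} [Fintype V] {G : SimpleGraph V} {s t : Set V}

noncomputable def cutEdges (G : SimpleGraph V) (s : Set V) : Finset (Sym2 V) :=
  G.edgeSet.toFinite.toFinset.filter (Sym2.Crosses s)

@[simp]
lemma cutEdges_empty : G.cutEdges ∅ = ∅ :=
  filter_false_of_mem fun e _ => by induction e with | _ u v => simp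

@[simp]
lemma cutEdges_univ : G.cutEdges Set.univ = ∅ :=
  filter_false_of_mem fun e _ => by induction e with | _ u v => simp

lemma Connected.cutEdges_nonempty (hG : G.Connected) (hs : s.Nonempty) (hs' : s ≠ Set.univ) :
    (G.cutEdges s).Nonempty := by
  obtain ⟨u, hu⟩ := hs
  obtain ⟨v, hv⟩ := (Set.ne_univ_iff_exists_notMem s).1 hs'
  obtain ⟨d, -, hd, hd'⟩ := (hG.preconnected u v).some.exists_boundary_dart s hu hv
  exact ⟨d.edge, mem_filter.2 ⟨(Set.Finite.mem_toFinset _).2 d.edge_mem, Or.inl ⟨hd, hd'⟩⟩⟩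

lemma Connected.eq_of_cutEdges_eq (hG : G.Connected) (h : G.cutEdges s = G.cutEdges t) {v : V}
    (hv : v ∈ s ↔ v ∈ t) : s = t := by
  by_contra hst
  have hv' : v ∉ symmDiff s t := by simp only [Set.mem_symmDiff]; tauto
  obtain ⟨e, he⟩ := hG.cutEdges_nonempty (Set.symmDiff_nonempty.2 hst)
    fun h' => hv' (h' ▸ Set.mem_univ v)
  rw [cutEdges, mem_filter] at he
  have hcross : Sym2.Crosses s e ↔ Sym2.Crosses t e := by
    simpa [cutEdges, (Set.Finite.mem_toFinset _).1 he.1] using congrArg (e ∈ ·) h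
  have := Sym2.crosses_symmDiff.1 he.2
  rw [xor_def] at this
  tauto

lemma IsTree.card_toFinset_edgeSet_add_one (hG : G.IsTree) :
    #G.edgeSet.toFinite.toFinset + 1 = Fintype.card V := by
  rw [← hG.card_edgeFinset]; congr 2; exact Set.toFinite_toFinset _

lemma IsTree.sum_cutEdges {M : Type*} [AddCommMonoid M] (hG : G.IsTree)
    (f : Finset (Sym2 V) → M) :
    ∑ s : Finset V, f (G.cutEdges s) = 2 • ∑ C ∈ G.edgeSet.toFinite.toFinset.powerset, f C := by
  obtain ⟨v⟩ := hG.connected.nonempty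
  have hE := hG.card_toFinset_edgeSet_add_one
  set E := G.edgeSet.toFinite.toFinset
  let φ : Finset V → Finset (Sym2 V) × Bool := fun s => (G.cutEdges s, decide (v ∈ s))
  let 𝒞 := E.powerset ×ˢ (univ : Finset Bool)
  have hmaps : Set.MapsTo φ (univ : Finset (Finset V)) 𝒞 := fun _ _ =>
    mem_product.2 ⟨mem_powerset.2 (filter_subset _ _), mem_univ _⟩
  have hinj : Set.InjOn φ (univ : Finset (Finset V)) := fun s _ t _ hst => by
    simp only [φ, Prod.mk.injEq, decide_eq_decide] at hst
    exact coe_inj.1 (hG.connected.eq_of_cutEdges_eq hst.1 (by simpa using hst.2))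
  have hcard : #𝒞 ≤ #(univ : Finset (Finset V)) := by
    simp [𝒞, ← hE, pow_succ]
  calc ∑ s : Finset V, f (G.cutEdges s)
      = ∑ p ∈ 𝒞, f p.1 :=
        sum_nbij φ hmaps hinj (surjOn_of_injOn_of_card_le φ hmaps hinj hcard) fun _ _ => rfl
    _ = 2 • ∑ C ∈ E.powerset, f C := by
        simp [𝒞, sum_product_right]

lemma IsTree.sum_expect_cutEdges (hG : G.IsTree) (w : Sym2 V → ℝ) :
    ∑ s : Finset V, 𝔼 e ∈ G.cutEdges s, w e =
      2 * G.weight w * ((2 ^ #G.edgeSet.toFinite.toFinset - 1) / #G.edgeSet.toFinite.toFinset) := by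
  rw [hG.sum_cutEdges fun C => 𝔼 e ∈ C, w e, sum_powerset_expect, nsmul_eq_mul, mul_assoc]
  rfl

lemma IsTree.sum_expect_cutEdges_preimage {X : Type*} [DecidableEq X] {P : Finset X}
    {G : SimpleGraph P} (hG : G.IsTree) (w : Sym2 P → ℝ) :
    ∑ R ∈ P.powerset with R.Nonempty ∧ R ≠ P, 𝔼 e ∈ G.cutEdges (Subtype.val ⁻¹' R), w e =
      2 * G.weight w * ((2 ^ #G.edgeSet.toFinite.toFinset - 1) / #G.edgeSet.toFinite.toFinset) := by
  have hP : Subtype.val ⁻¹' (P : Set X) = (Set.univ : Set P) := Set.eq_univ_of_forall fun x => x.2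
  -- `R = ∅` and `R = P` have no cut edges, so they contribute `𝔼 e ∈ ∅, w e = 0`.
  rw [← hG.sum_expect_cutEdges, sum_filter_of_ne, sum_powerset_eq_sum_univ_map]
  · simp [Set.preimage_image_eq _ Subtype.val_injective]
  · intro R _ hR
    refine ⟨nonempty_iff_ne_empty.2 ?_, ?_⟩ <;> rintro rfl <;> simp [hP] at hR

end Cut

end SimpleGraph

section Mst

variable {X : Type*} [MetricSpace X]

noncomputable def edgeLength (S : Finset X) : Sym2 S → ℝ :=
  Sym2.lift ⟨fun u v => dist (u : X) v, fun _ _ => _root_.dist_comm _ _⟩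

lemma edgeLength_nonneg (S : Finset X) (e : Sym2 S) : 0 ≤ edgeLength S e := by
  induction e with
  | _ u v => exact dist_nonneg

lemma edgeLength_comp_map_impEmbedding {A S : Finset X} (hA : A ⊆ S) :
    edgeLength S ∘ Sym2.map (Subtype.impEmbedding _ _ hA) = edgeLength A := by
  ext e
  induction e with
  | _ u v => rfl

lemma mst_eq_sInf_weight (S : Finset X) :
    mst S = sInf ((weight (edgeLength S)) '' {T | T.IsTree}) := by
  simp_rw [mst, Set.image, weight, finsum_mem_eq_finite_toFinset_sum _ (Set.toFinite _), eq_comm]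
  rfl

lemma SimpleGraph.IsTree.mst_le_weight {S : Finset X} {T : SimpleGraph S} (hT : T.IsTree) :
    mst S ≤ T.weight (edgeLength S) := by
  rw [mst_eq_sInf_weight]
  exact csInf_le ⟨0, Set.forall_mem_image.2 fun G _ => weight_nonneg (edgeLength_nonneg S) G⟩
    ⟨T, hT, rfl⟩

lemma SimpleGraph.Connected.mst_le_weight {S : Finset X} {G : SimpleGraph S} (hG : G.Connected) :
    mst S ≤ G.weight (edgeLength S) := by
  obtain ⟨T, hTG, hT⟩ := hG.exists_isTree_le
  exact hT.mst_le_weight.trans (weight_mono (edgeLength_nonneg S) hTG)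

lemma exists_isTree_weight_eq_mst {S : Finset X} (hS : S.Nonempty) :
    ∃ T : SimpleGraph S, T.IsTree ∧ T.weight (edgeLength S) = mst S := by
  have : Nonempty S := hS.to_subtype
  obtain ⟨T, -, hT⟩ := (connected_top (V := S)).exists_isTree_le
  rw [mst_eq_sInf_weight]
  exact Set.Nonempty.csInf_mem (s := weight (edgeLength S) '' {T | T.IsTree}) ⟨_, T, hT, rfl⟩
    (Set.toFinite _)

lemma mst_le_mst_add_mst_sdiff_add_dist [DecidableEq X] {S A : Finset X} (hA : A ⊆ S) {a b : X}
    (ha : a ∈ A) (hb : b ∈ S \ A) : mst S ≤ mst A + mst (S \ A) + dist a b := by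
  obtain ⟨TA, hTA, hwA⟩ := exists_isTree_weight_eq_mst ⟨a, ha⟩
  obtain ⟨TB, hTB, hwB⟩ := exists_isTree_weight_eq_mst ⟨b, hb⟩
  let ιA := Subtype.impEmbedding _ _ hA
  let ιB := Subtype.impEmbedding _ _ (sdiff_subset : S \ A ⊆ S)
  let a' : S := ιA ⟨a, ha⟩
  let b' : S := ιB ⟨b, hb⟩
  have hab : a' ≠ b' := fun h => (mem_sdiff.1 hb).2 ((show a = b from congrArg Subtype.val h) ▸ ha)
  let H := TA.map ιA ⊔ TB.map ιB ⊔ edge a' b'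
  have hreach : ∀ u : S, H.Reachable u a' := by
    intro u
    by_cases hu : (u : X) ∈ A
    · have := (hTA.connected.preconnected ⟨u, hu⟩ ⟨a, ha⟩).map (Embedding.map ιA TA).toHom
      exact this.mono (le_sup_left.trans le_sup_left)
    · have hu' : (u : X) ∈ S \ A := mem_sdiff.2 ⟨u.2, hu⟩
      have := (hTB.connected.preconnected ⟨u, hu'⟩ ⟨b, hb⟩).map (Embedding.map ιB TB).toHom
      refine (this.mono (le_sup_right.trans le_sup_left)).trans (Adj.reachable ?_).symm
      exact Or.inr ((edge_adj ..).2 ⟨Or.inl ⟨rfl, rfl⟩, hab⟩)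
  have : Nonempty S := ⟨a'⟩
  have hH : H.Connected := ⟨fun u v => (hreach u).trans (hreach v).symm⟩
  have hw := edgeLength_nonneg S
  calc mst S ≤ H.weight (edgeLength S) := hH.mst_le_weight
    _ ≤ (TA.map ιA ⊔ TB.map ιB).weight (edgeLength S) + (edge a' b').weight (edgeLength S) :=
        weight_sup_le hw _ _
    _ ≤ (TA.map ιA).weight (edgeLength S) + (TB.map ιB).weight (edgeLength S)
          + (edge a' b').weight (edgeLength S) := by
        gcongr
        exact weight_sup_le hw _ _
    _ = mst A + mst (S \ A) + dist a b := by
        rw [weight_map, weight_map, weight_edge hab, edgeLength_comp_map_impEmbedding,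
          edgeLength_comp_map_impEmbedding, hwA, hwB]
        rfl

lemma mst_le_mst_add_mst_sdiff_add_edgeLength [DecidableEq X] {P R : Finset X} (hRP : R ⊆ P)
    {e : Sym2 P} (he : Sym2.Crosses (Subtype.val ⁻¹' R) e) :
    mst P ≤ mst R + mst (P \ R) + edgeLength P e := by
  induction e with
  | _ u v =>
    rcases he with ⟨hu, hv⟩ | ⟨hv, hu⟩
    · exact mst_le_mst_add_mst_sdiff_add_dist hRP hu (mem_sdiff.2 ⟨v.2, hv⟩)
    · have := mst_le_mst_add_mst_sdiff_add_dist hRP hv (mem_sdiff.2 ⟨u.2, hu⟩)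
      rwa [_root_.dist_comm] at this

lemma SimpleGraph.Connected.mst_sub_expect_le [DecidableEq X] {P R : Finset X} {T : SimpleGraph P}
    (hT : T.Connected) (hRP : R ⊆ P) (hR : R.Nonempty) (hRP' : R ≠ P) :
    mst P - 𝔼 e ∈ T.cutEdges (Subtype.val ⁻¹' R), edgeLength P e ≤ mst R + mst (P \ R) := by
  obtain ⟨r, hr⟩ := hR
  obtain ⟨p, hp, hpR⟩ := exists_of_ssubset (hRP.ssubset_of_ne hRP')
  have hcut := hT.cutEdges_nonempty (s := Subtype.val ⁻¹' (R : Set X)) ⟨⟨r, hRP hr⟩, hr⟩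
    (Set.ne_univ_iff_exists_notMem _ |>.2 ⟨⟨p, hp⟩, hpR⟩)
  have := le_expect hcut fun e he => sub_le_iff_le_add'.2
    (mst_le_mst_add_mst_sdiff_add_edgeLength hRP (mem_filter.1 he).2)
  linarith

end Mst

theorem average_mst_ratio_ge (d : ℕ) (P : Finset (EuclideanSpace ℝ (Fin d)))
    (hn : 2 ≤ P.card) :
    ((P.card : ℝ) - 2) / ((P.card : ℝ) - 1) * (2 ^ P.card - 2) * mst P ≤
      ∑ R ∈ P.powerset.filter (fun R => R.Nonempty ∧ R ≠ P), (mst R + mst (P \ R)) := by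
  have hP : P.Nonempty := card_pos.1 (by omega)
  obtain ⟨T, hT, hTP⟩ := exists_isTree_weight_eq_mst hP
  have hsum := hT.sum_expect_cutEdges_preimage (edgeLength P)
  have hm : #T.edgeSet.toFinite.toFinset + 1 = #P :=
    hT.card_toFinset_edgeSet_add_one.trans (Fintype.card_coe P)
  set m := #T.edgeSet.toFinite.toFinset
  have hK : (#(P.powerset.filter fun R => R.Nonempty ∧ R ≠ P) : ℝ) = 2 ^ #P - 2 := by
    rw [eq_sub_iff_add_eq]; exact_mod_cast card_powerset_filter_nonempty_ne_add_two hP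
  have hm0 : (m : ℝ) ≠ 0 := Nat.cast_ne_zero.2 (by omega)
  calc ((#P : ℝ) - 2) / (#P - 1) * (2 ^ #P - 2) * mst P
      = ∑ R ∈ P.powerset with R.Nonempty ∧ R ≠ P,
          (mst P - 𝔼 e ∈ T.cutEdges (Subtype.val ⁻¹' R), edgeLength P e) := by
        rw [sum_sub_distrib, sum_const, nsmul_eq_mul, hK, hsum, hTP, ← hm]
        push_cast
        rw [add_sub_cancel_right, pow_succ]
        field_simp
        ring
    _ ≤ ∑ R ∈ P.powerset with R.Nonempty ∧ R ≠ P, (mst R + mst (P \ R)) :=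
        sum_le_sum fun R hR => by
          obtain ⟨hRP, hR, hRP'⟩ := mem_filter.1 hR
          exact hT.connected.mst_sub_expect_le (mem_powerset.1 hRP) hR hRP'
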